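/- Let Q : ℝ → [0,∞) be convex and even, and let A ≤ B. For any measurable φ on an interval J, the two-sided truncation Tr_{A,B}∘φ = min(B, max(A, φ)) satisfies W(Tr_{A,B}∘φ, J) ≤ W(φ, J). -/

import Mathlib

open MeasureTheory Set Filter Topology
open scoped ENNReal

noncomputable section

/-- Lebesgue average of a (nonnegative-valued, via `ENNReal.ofReal`) function over `J`. -/
def avg (J : Set ℝ) (f : ℝ → ℝ) : ℝ≥0∞ :=
  (volume J)⁻¹ * ∫⁻ x in J, ENNReal.ofReal (f x)

/-- `V_c(φ, J) = ⟨Q(φ - c)⟩_J`. -/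
def Vc (Q φ : ℝ → ℝ) (J : Set ℝ) (c : ℝ) : ℝ≥0∞ :=
  avg J (fun x => Q (φ x - c))

/-- `V(φ, J) = inf_c V_c(φ, J)`. -/
def V (Q φ : ℝ → ℝ) (J : Set ℝ) : ℝ≥0∞ :=
  ⨅ c : ℝ, Vc Q φ J c

/-- `W(φ, J) = sup { V(φ, L) : L ⊆ J an interval }`. -/
def W (Q φ : ℝ → ℝ) (J : Set ℝ) : ℝ≥0∞ :=
  ⨆ (a : ℝ) (b : ℝ) (_ : Icc a b ⊆ J), V Q φ (Icc a b)

/-- Decreasing rearrangement of `f : [0,1] → ℝ`: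
`f*(t) = inf {λ : |{s ∈ [0,1] : f(s) > λ}| ≤ t}`. -/
def decRe (f : ℝ → ℝ) (t : ℝ) : ℝ :=
  sInf {l : ℝ | volume {s ∈ Icc (0:ℝ) 1 | l < f s} ≤ ENNReal.ofReal t}

/-- `𝒞(φ, J)`: the minimizer of `c ↦ V_c(φ, J)` (when it exists). -/
def CC (Q φ : ℝ → ℝ) (J : Set ℝ) : ℝ :=
  Classical.epsilon (fun c => ∀ c', Vc Q φ J c ≤ Vc Q φ J c')

/-- `α`-concatenation of `φ₋ : [a₋,b₋] → ℝ` and `φ₊ : [a₊,b₊] → ℝ`, as a function on `[0,1]`. -/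
def concat (φm φp : ℝ → ℝ) (am bm ap bp α : ℝ) : ℝ → ℝ :=
  fun s => if s < α then φm (am + (bm - am) * (s / α))
           else φp (ap + (bp - ap) * ((s - α) / (1 - α)))

/-! A 1-Lipschitz map `T` (such as the truncation `Tr_{A,B}`) brings values closer
together, `|T s - T c| ≤ |s - c|`, and an even convex `Q` is nondecreasing in `|t|`. Hence
`Q (T (φ x) - T c) ≤ Q (φ x - c)` pointwise, so on every interval the oscillation of `T ∘ φ`
about the constant `T c` is at most that of `φ` about `c`. Taking the infimum over `c` and the
supremum over subintervals gives the inequality for `W`. -/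

lemma ConvexOn.le_of_abs_le_of_even {Q : ℝ → ℝ} (hQ : ConvexOn ℝ univ Q)
    (hQe : ∀ t, Q (-t) = Q t) {u v : ℝ} (h : |u| ≤ |v|) : Q u ≤ Q v := by
  have hQ_abs : Q |v| = Q v := by
    rcases abs_choice v with hv | hv <;> rw [hv]
    exact hQe v
  have hu : u ∈ segment ℝ (-|v|) |v| := by
    rw [segment_eq_Icc (neg_le_self (abs_nonneg v))]
    exact abs_le.mp h
  calc Q u ≤ max (Q (-|v|)) (Q |v|) := hQ.le_on_segment trivial trivial hu
    _ = Q v := by rw [hQe, max_self, hQ_abs]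

section Contraction

variable {Q : ℝ → ℝ} (hQ : ConvexOn ℝ univ Q) (hQe : ∀ t, Q (-t) = Q t)
  {T : ℝ → ℝ} (hT : LipschitzWith 1 T)
include hQ hQe hT

lemma Vc_comp_le (φ : ℝ → ℝ) (J : Set ℝ) (c : ℝ) :
    Vc Q (fun x => T (φ x)) J (T c) ≤ Vc Q φ J c := by
  refine mul_le_mul_right (lintegral_mono fun x => ENNReal.ofReal_le_ofReal ?_) _
  refine hQ.le_of_abs_le_of_even hQe ?_
  simpa only [Real.dist_eq, NNReal.coe_one, one_mul] using hT.dist_le_mul (φ x) c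

lemma V_comp_le (φ : ℝ → ℝ) (J : Set ℝ) : V Q (fun x => T (φ x)) J ≤ V Q φ J :=
  le_iInf fun c => iInf_le_of_le (T c) (Vc_comp_le hQ hQe hT φ J c)

lemma W_comp_le (φ : ℝ → ℝ) (J : Set ℝ) : W Q (fun x => T (φ x)) J ≤ W Q φ J :=
  iSup₂_mono fun _ _ => iSup_mono fun _ => V_comp_le hQ hQe hT φ _

end Contraction

theorem stmt12_general (Q : ℝ → ℝ) (hQ : ConvexOn ℝ univ Q) (hQe : ∀ t, Q (-t) = Q t)
    (A B : ℝ)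
    (φ : ℝ → ℝ) (a b : ℝ) :
    W Q (fun x => min B (max A (φ x))) (Icc a b) ≤ W Q φ (Icc a b) :=
  W_comp_le hQ hQe ((LipschitzWith.id.const_max A).const_min B) φ (Icc a b)

theorem stmt12 (Q : ℝ → ℝ) (hQ : ConvexOn ℝ univ Q) (hQe : ∀ t, Q (-t) = Q t)
    (hQ0 : ∀ t, 0 ≤ Q t) (A B : ℝ) (hAB : A ≤ B)
    (φ : ℝ → ℝ) (hφ : Measurable φ) (a b : ℝ) :
    W Q (fun x => min B (max A (φ x))) (Icc a b) ≤ W Q φ (Icc a b) :=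
  stmt12_general Q hQ hQe A B φ a b
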